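/- arXiv:1502.05975 — 3 statements merged into one kernel-verified Lean document; each statement's English description precedes it below -/
import Mathlib

section
/- Let A be a diagonalizable n×n real matrix with distinct nonzero eigenvalues λ_1,…,λ_n. For any matrix X, the derivative at t = 0 of t ↦ log |λ_i(exp(tX)·A)| equals (1/λ_i) · Tr(p_i(A) · X · A), which equals Tr(p_i(A) · X). -/
open NormedSpace in
lemma entry_hasDerivAt {n : ℕ} (X A : Matrix (Fin n) (Fin n) ℝ) (j k : Fin n) :
    HasDerivAt (fun t : ℝ => (exp (t • X) * A) j k) ((X * A) j k) 0 := by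
  letI : SeminormedRing (Matrix (Fin n) (Fin n) ℝ) := Matrix.linftyOpSemiNormedRing
  letI : NormedRing (Matrix (Fin n) (Fin n) ℝ) := Matrix.linftyOpNormedRing
  letI : NormedAlgebra ℝ (Matrix (Fin n) (Fin n) ℝ) := Matrix.linftyOpNormedAlgebra
  have h := hasDerivAt_exp_smul_const (𝕂 := ℝ) X (0 : ℝ)
  rw [zero_smul, exp_zero, one_mul] at h
  let φ : Matrix (Fin n) (Fin n) ℝ →ₗ[ℝ] ℝ :=
    { toFun := fun M => (M * A) j k
      map_add' := fun M N => by simp [Matrix.add_mul]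
      map_smul' := fun c M => by simp [Matrix.smul_mul] }
  have hφ := (LinearMap.toContinuousLinearMap φ).hasFDerivAt.comp_hasDerivAt 0 h
  exact hφ

open NormedSpace in
/-- For `A` diagonalizable with distinct nonzero eigenvalues, the derivative at `t = 0`
of `t ↦ log |λᵢ(exp (tX) * A)|` (expressed via a differentiable eigenvalue curve `ℓ`
of `exp (tX) * A` with `ℓ 0 = λᵢ`, whose eigenvector at `t = 0` spans the `i`-th
eigenspace of `A`) equals `(1/λᵢ) * Tr(pᵢ(A) * X * A)`, which equals `Tr(pᵢ(A) * X)`. -/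
theorem stmt4 {n : ℕ} (A P Q X : Matrix (Fin n) (Fin n) ℝ) (l : Fin n → ℝ)
    (hPQ : P * Q = 1) (hQP : Q * P = 1)
    (hA : A = P * Matrix.diagonal l * Q)
    (hdist : Function.Injective l) (hne : ∀ k, l k ≠ 0)
    (i : Fin n) (p : Matrix (Fin n) (Fin n) ℝ)
    (hp : p = P * Matrix.diagonal (Pi.single i 1) * Q)
    (ℓ : ℝ → ℝ) (ℓ' : ℝ) (hℓ : HasDerivAt ℓ ℓ' 0) (hℓ0 : ℓ 0 = l i)
    (v : ℝ → (Fin n → ℝ)) (hv0 : v 0 ≠ 0)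
    (hv0p : p.mulVec (v 0) = v 0)
    (hvd : ∀ k, DifferentiableAt ℝ (fun t => v t k) 0)
    (heig : ∀ t, (exp (t • X) * A).mulVec (v t) = ℓ t • v t) :
    HasDerivAt (fun t => Real.log |ℓ t|)
        ((1 / l i) * Matrix.trace (p * X * A)) 0 ∧
    (1 / l i) * Matrix.trace (p * X * A) = Matrix.trace (p * X) := by
  set v' : Fin n → ℝ := fun k => deriv (fun t => v t k) 0 with hv'def
  have hv' : ∀ k, HasDerivAt (fun t => v t k) (v' k) 0 := fun k => (hvd k).hasDerivAt
  have hE0 : exp ((0:ℝ) • X) * A = A := by rw [zero_smul, exp_zero, one_mul]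
  -- key derivative equation
  have key : ∀ j, ((X * A).mulVec (v 0)) j + (A.mulVec v') j
      = ℓ' * v 0 j + l i * v' j := by
    intro j
    have h1 : HasDerivAt (fun t => ((exp (t • X) * A).mulVec (v t)) j)
        (((X * A).mulVec (v 0)) j + (A.mulVec v') j) 0 := by
      have := HasDerivAt.fun_sum (u := Finset.univ)
        (fun k _ => (entry_hasDerivAt X A j k).mul (hv' k))
      simp only [Matrix.mulVec, dotProduct, hE0, Finset.sum_add_distrib] at *
      exact this
    have h2 : HasDerivAt (fun t => ℓ t * v t j) (ℓ' * v 0 j + l i * v' j) 0 := by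
      have := hℓ.mul (hv' j)
      rwa [hℓ0] at this
    have hfe : (fun t => ((exp (t • X) * A).mulVec (v t)) j) = fun t => ℓ t * v t j := by
      funext t
      rw [heig t]; rfl
    rw [hfe] at h1
    exact h1.unique h2
  have veq : (X * A).mulVec (v 0) + A.mulVec v' = ℓ' • v 0 + l i • v' := by
    funext j
    simpa using key j
  -- structure facts
  have hQp : Q * p = Matrix.diagonal (Pi.single i 1) * Q := by
    rw [hp, ← Matrix.mul_assoc, ← Matrix.mul_assoc, hQP, Matrix.one_mul]
  have hQA : Q * A = Matrix.diagonal l * Q := by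
    rw [hA, ← Matrix.mul_assoc, ← Matrix.mul_assoc, hQP, Matrix.one_mul]
  set c : ℝ := (Q.mulVec (v 0)) i with hcdef
  have hQv : Q.mulVec (v 0) = Pi.single i c := by
    have h0 : Q.mulVec (p.mulVec (v 0)) = Q.mulVec (v 0) := by rw [hv0p]
    rw [Matrix.mulVec_mulVec, hQp, ← Matrix.mulVec_mulVec] at h0
    funext j
    rcases eq_or_ne j i with rfl | hj
    · simp [hcdef]
    · have := congrFun h0 j
      rw [Matrix.mulVec_diagonal] at this
      simp only [Pi.single_eq_of_ne hj, zero_mul] at this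
      rw [Pi.single_eq_of_ne hj, ← this]
  have hc : c ≠ 0 := by
    intro h0
    apply hv0
    have : Q.mulVec (v 0) = 0 := by rw [hQv, h0]; simp
    have h1 : (P * Q).mulVec (v 0) = 0 := by
      rw [← Matrix.mulVec_mulVec, this, Matrix.mulVec_zero]
    rwa [hPQ, Matrix.one_mulVec] at h1
  have hv0eq : v 0 = fun j => P j i * c := by
    have : (P * Q).mulVec (v 0) = v 0 := by rw [hPQ, Matrix.one_mulVec]
    rw [← Matrix.mulVec_mulVec, hQv, Matrix.mulVec_single] at this
    exact this.symm
  -- trace(p X A) = ℓ'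
  have hQXA : (Q.mulVec ((X * A).mulVec (v 0))) i = ℓ' * c := by
    have h0 := congrFun (congrArg Q.mulVec veq) i
    simp only [Matrix.mulVec_add, Matrix.mulVec_smul] at h0
    have h1 : Q.mulVec (A.mulVec v') = (Matrix.diagonal l).mulVec (Q.mulVec v') := by
      rw [Matrix.mulVec_mulVec, hQA, ← Matrix.mulVec_mulVec]
    rw [h1] at h0
    simp only [Pi.add_apply, Pi.smul_apply, smul_eq_mul, Matrix.mulVec_diagonal] at h0
    rw [hQv] at h0
    simp only [Pi.single_eq_same] at h0
    linarith
  have hdtr : ∀ B : Matrix (Fin n) (Fin n) ℝ,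
      Matrix.trace (Matrix.diagonal (Pi.single i (1:ℝ)) * B) = B i i := by
    intro B
    simp [Matrix.trace, Matrix.diag_apply, Pi.single_apply, ite_mul]
  have htr : Matrix.trace (p * X * A) = ℓ' := by
    have hassoc2 : p * X * A = P * (Matrix.diagonal (Pi.single i 1) * (Q * (X * A))) := by
      rw [hp]; noncomm_ring
    rw [hassoc2, Matrix.trace_mul_comm, Matrix.mul_assoc, hdtr]
    have h3 : (Q * (X * A) * P) i i = ∑ j, (Q * (X * A)) i j * P j i := by
      rw [Matrix.mul_apply]
    rw [h3]
    have hPcol : ∀ j, P j i = v 0 j * c⁻¹ := by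
      intro j
      rw [hv0eq]
      field_simp
    have hsum : ∑ j, (Q * (X * A)) i j * P j i
        = (∑ j, (Q * (X * A)) i j * v 0 j) * c⁻¹ := by
      rw [Finset.sum_mul]
      exact Finset.sum_congr rfl fun j _ => by rw [hPcol j, mul_assoc]
    rw [hsum]
    have h4 : ∑ j, (Q * (X * A)) i j * v 0 j = (Q.mulVec ((X * A).mulVec (v 0))) i := by
      rw [Matrix.mulVec_mulVec]; rfl
    rw [h4, hQXA]
    field_simp
  -- second equality
  have hAp : A * p = l i • p := by
    have h2 : Matrix.diagonal l * Matrix.diagonal (Pi.single i (1:ℝ))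
        = l i • Matrix.diagonal (Pi.single i (1:ℝ)) := by
      ext a b
      simp only [Matrix.diagonal_mul_diagonal, Matrix.smul_apply, Matrix.diagonal_apply,
        Pi.single_apply, smul_eq_mul, mul_ite, mul_one, mul_zero]
      by_cases h : a = b <;> by_cases h' : b = i <;> by_cases h'' : a = i <;> simp [h, h', h'']
    calc A * p = P * (Matrix.diagonal l * (Q * P) * Matrix.diagonal (Pi.single i 1)) * Q := by
          rw [hA, hp]; noncomm_ring
      _ = P * (Matrix.diagonal l * Matrix.diagonal (Pi.single i 1)) * Q := by
          rw [hQP]; noncomm_ring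
      _ = l i • p := by
          rw [h2, Matrix.mul_smul, Matrix.smul_mul, hp, Matrix.mul_assoc]
  have htr2 : Matrix.trace (p * X * A) = l i * Matrix.trace (p * X) := by
    rw [Matrix.trace_mul_cycle, hAp, Matrix.smul_mul, Matrix.trace_smul, smul_eq_mul]
  refine ⟨?_, ?_⟩
  · have hlog : HasDerivAt (fun t => Real.log (ℓ t)) (ℓ' / ℓ 0) 0 :=
      hℓ.log (by rw [hℓ0]; exact hne i)
    have hfe : (fun t => Real.log |ℓ t|) = fun t => Real.log (ℓ t) := by
      funext t; rw [Real.log_abs]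
    rw [hfe]
    have : ℓ' / ℓ 0 = 1 / l i * Matrix.trace (p * X * A) := by
      rw [htr, hℓ0]; field_simp
    rwa [this] at hlog
  · rw [htr2, one_div, inv_mul_cancel_left₀ (hne i)]
end

section
/- For A, B ∈ SL(2,ℝ) hyperbolic elements whose axes in ℍ² intersect at angle φ (measured between positive directions), the cross-ratio b(A,B) of the attracting eigenline of A, the repelling eigen-coline of A, the attracting eigenline of B, and the repelling eigen-coline of B equals cos²(φ/2), and hence b(A,B) − 1/2 = (1/2)cos φ. -/
set_option maxHeartbeats 1000000

private lemma sign_mul_abs' (x : ℝ) (hx : x ≠ 0) : Real.sign x * |x| = x := by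
  rcases hx.lt_or_gt with h | h
  · rw [Real.sign_of_neg h, abs_of_neg h]; ring
  · rw [Real.sign_of_pos h, abs_of_pos h]; ring

private lemma sign_sq' (x : ℝ) (hx : x ≠ 0) : Real.sign x ^ 2 = 1 := by
  rcases hx.lt_or_gt with h | h
  · rw [Real.sign_of_neg h]; ring
  · rw [Real.sign_of_pos h]; ring

private lemma lin_decomp (f : (Fin 2 → ℝ) →ₗ[ℝ] ℝ) (v : Fin 2 → ℝ) :
    f v = v 0 * f ![1,0] + v 1 * f ![0,1] := by
  have hv : v = v 0 • ![(1:ℝ),0] + v 1 • ![0,1] := by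
    funext i; fin_cases i <;> simp
  conv_lhs => rw [hv]
  rw [map_add, map_smul, map_smul, smul_eq_mul, smul_eq_mul]

open Complex in
/-- For hyperbolic `A, B ∈ SL(2,ℝ)` whose axes in the upper half-plane meet at a point
`z` with angle `φ` between positive directions (from repelling to attracting fixed
point), the cross-ratio `b(A,B)` of the attracting eigenline of `A`, the repelling
eigen-coline of `A`, the attracting eigenline of `B` and the repelling eigen-coline of
`B` equals `cos²(φ/2)`, hence `b(A,B) - 1/2 = (1/2) cos φ`. -/
theorem stmt15 (A B : Matrix (Fin 2) (Fin 2) ℝ)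
    (hdetA : A.det = 1) (hdetB : B.det = 1)
    -- eigendata of A: attracting eigenvector `ap` (eigenvalue `lA1`), repelling `ar`
    (lA1 lA2 : ℝ) (hlA : |lA2| < |lA1|)
    (ap ar : Fin 2 → ℝ) (hap : ap ≠ 0) (har : ar ≠ 0)
    (heA1 : A.mulVec ap = lA1 • ap) (heA2 : A.mulVec ar = lA2 • ar)
    -- `am` is the repelling eigen-coline of `A`: it vanishes on `ar`
    (am : (Fin 2 → ℝ) →ₗ[ℝ] ℝ) (hamr : am ar = 0) (hamp : am ap ≠ 0)
    -- eigendata of B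
    (lB1 lB2 : ℝ) (hlB : |lB2| < |lB1|)
    (bp br : Fin 2 → ℝ) (hbp : bp ≠ 0) (hbr : br ≠ 0)
    (heB1 : B.mulVec bp = lB1 • bp) (heB2 : B.mulVec br = lB2 • br)
    (bm : (Fin 2 → ℝ) →ₗ[ℝ] ℝ) (hbmr : bm br = 0) (hbmp : bm bp ≠ 0)
    -- the fixed points of the Möbius actions on ∂ℍ are the projectivized eigenvectors
    (hap1 : ap 1 ≠ 0) (har1 : ar 1 ≠ 0) (hbp1 : bp 1 ≠ 0) (hbr1 : br 1 ≠ 0)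
    (xAp xAm xBp xBm : ℝ)
    (hxAp : xAp = ap 0 / ap 1) (hxAm : xAm = ar 0 / ar 1)
    (hxBp : xBp = bp 0 / bp 1) (hxBm : xBm = br 0 / br 1)
    (hAx : xAp ≠ xAm) (hBx : xBp ≠ xBm)
    -- `z` is the intersection point of the two axes in the upper half-plane:
    (z : ℂ) (hz : 0 < z.im)
    (hzA : ‖z - (((xAp + xAm) / 2 : ℝ) : ℂ)‖ = |xAp - xAm| / 2)
    (hzB : ‖z - (((xBp + xBm) / 2 : ℝ) : ℂ)‖ = |xBp - xBm| / 2)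
    -- tangent vectors to the axes at `z` in the positive direction (repelling → attracting)
    (tA tB : ℂ)
    (htA : tA = (Real.sign (xAm - xAp) : ℝ) • (Complex.I * (z - (((xAp + xAm) / 2 : ℝ) : ℂ))))
    (htB : tB = (Real.sign (xBm - xBp) : ℝ) • (Complex.I * (z - (((xBp + xBm) / 2 : ℝ) : ℂ))))
    -- `φ` is the angle between the positive directions of the axes at `z`
    (φ : ℝ)
    (hφ : Real.cos φ = (tA * (starRingEnd ℂ) tB).re / (‖tA‖ * ‖tB‖))
    -- the cross-ratio `b(A,B) = b(ξ¹(A), θ¹(A), ξ¹(B), θ¹(B))`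
    (bAB : ℝ) (hbAB : bAB = (am bp * bm ap) / (am ap * bm bp)) :
    bAB = Real.cos (φ / 2) ^ 2 ∧ bAB - 1 / 2 = (1 / 2) * Real.cos φ := by
  have hAne : xAm - xAp ≠ 0 := sub_ne_zero.mpr (Ne.symm hAx)
  have hBne : xBm - xBp ≠ 0 := sub_ne_zero.mpr (Ne.symm hBx)
  set sA := Real.sign (xAm - xAp) with hsA
  set sB := Real.sign (xBm - xBp) with hsB
  -- coordinates
  have hap0 : ap 0 = xAp * ap 1 := by rw [hxAp, div_mul_cancel₀ _ hap1]
  have har0 : ar 0 = xAm * ar 1 := by rw [hxAm, div_mul_cancel₀ _ har1]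
  have hbp0 : bp 0 = xBp * bp 1 := by rw [hxBp, div_mul_cancel₀ _ hbp1]
  have hbr0 : br 0 = xBm * br 1 := by rw [hxBm, div_mul_cancel₀ _ hbr1]
  -- the functional am
  set α := am ![(1:ℝ),0] with hα
  set α' := am ![(0:ℝ),1] with hα'
  have hamv : ∀ v : Fin 2 → ℝ, am v = v 0 * α + v 1 * α' := fun v => lin_decomp am v
  have hα'eq : α' = -(xAm * α) := by
    have h := hamv ar
    rw [hamr, har0] at h
    have : ar 1 * (xAm * α + α') = 0 := by linarith [h]
    rcases mul_eq_zero.mp this with h' | h'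
    · exact absurd h' har1
    · linarith
  have hamap : am ap = ap 1 * α * (xAp - xAm) := by rw [hamv, hap0, hα'eq]; ring
  have hambp : am bp = bp 1 * α * (xBp - xAm) := by rw [hamv, hbp0, hα'eq]; ring
  -- the functional bm
  set β := bm ![(1:ℝ),0] with hβ
  set β' := bm ![(0:ℝ),1] with hβ'
  have hbmv : ∀ v : Fin 2 → ℝ, bm v = v 0 * β + v 1 * β' := fun v => lin_decomp bm v
  have hβ'eq : β' = -(xBm * β) := by
    have h := hbmv br
    rw [hbmr, hbr0] at h
    have : br 1 * (xBm * β + β') = 0 := by linarith [h]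
    rcases mul_eq_zero.mp this with h' | h'
    · exact absurd h' hbr1
    · linarith
  have hbmbp : bm bp = bp 1 * β * (xBp - xBm) := by rw [hbmv, hbp0, hβ'eq]; ring
  have hbmap : bm ap = ap 1 * β * (xAp - xBm) := by rw [hbmv, hap0, hβ'eq]; ring
  have hαne : α ≠ 0 := by
    intro h; apply hamp; rw [hamap, h]; ring
  have hβne : β ≠ 0 := by
    intro h; apply hbmp; rw [hbmbp, h]; ring
  -- cross-ratio in coordinates
  have hbAB' : bAB = ((xBp - xAm) * (xAp - xBm)) / ((xAp - xAm) * (xBp - xBm)) := by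
    rw [hbAB, hambp, hbmap, hamap, hbmbp]
    rw [div_eq_div_iff]
    · ring
    · rw [hamap] at hamp; rw [hbmbp] at hbmp
      exact mul_ne_zero hamp hbmp
    · exact mul_ne_zero (sub_ne_zero.mpr hAx) (sub_ne_zero.mpr hBx)
  -- circle equations
  have h1 : (z.re - (xAp + xAm)/2)^2 + z.im^2 = ((xAp - xAm)/2)^2 := by
    have h := congrArg (· ^ 2) hzA
    simp only [Complex.sq_norm, Complex.normSq_apply, div_pow, _root_.sq_abs, Complex.sub_re,
      Complex.sub_im, Complex.ofReal_re, Complex.ofReal_im] at h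
    linear_combination h
  have h2 : (z.re - (xBp + xBm)/2)^2 + z.im^2 = ((xBp - xBm)/2)^2 := by
    have h := congrArg (· ^ 2) hzB
    simp only [Complex.sq_norm, Complex.normSq_apply, div_pow, _root_.sq_abs, Complex.sub_re,
      Complex.sub_im, Complex.ofReal_re, Complex.ofReal_im] at h
    linear_combination h
  -- |tA| and |tB|
  have habs_tA : ‖tA‖ = |xAp - xAm| / 2 := by
    rw [htA, ← hzA]
    rw [Complex.real_smul, norm_mul, norm_mul, Complex.norm_real, Real.norm_eq_abs, Complex.norm_I]
    have : |sA| = 1 := by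
      rcases Real.sign_apply_eq_of_ne_zero _ hAne with h | h <;> rw [← hsA] at h <;>
        rw [h] <;> norm_num
    rw [this]; rw [hzA]; ring
  have habs_tB : ‖tB‖ = |xBp - xBm| / 2 := by
    rw [htB, ← hzB]
    rw [Complex.real_smul, norm_mul, norm_mul, Complex.norm_real, Real.norm_eq_abs, Complex.norm_I]
    have : |sB| = 1 := by
      rcases Real.sign_apply_eq_of_ne_zero _ hBne with h | h <;> rw [← hsB] at h <;>
        rw [h] <;> norm_num
    rw [this]; rw [hzB]; ring
  -- real part of tA * conj tB
  have hre : (tA * (starRingEnd ℂ) tB).re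
      = sA * sB * ((z.re - (xAp + xAm)/2) * (z.re - (xBp + xBm)/2) + z.im^2) := by
    rw [htA, htB]
    simp only [Complex.real_smul, map_mul, Complex.mul_re, Complex.mul_im,
      Complex.conj_re, Complex.conj_im, Complex.ofReal_re, Complex.ofReal_im,
      Complex.I_re, Complex.I_im, Complex.sub_re, Complex.sub_im]
    ring
  -- key identity for cos φ
  have hsAabs : sA * (|xAp - xAm| / 2) = (xAm - xAp) / 2 := by
    rw [abs_sub_comm]
    rw [show sA * (|xAm - xAp|/2) = (sA * |xAm - xAp|)/2 by ring,
      sign_mul_abs' _ hAne]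
  have hsBabs : sB * (|xBp - xBm| / 2) = (xBm - xBp) / 2 := by
    rw [abs_sub_comm]
    rw [show sB * (|xBm - xBp|/2) = (sB * |xBm - xBp|)/2 by ring,
      sign_mul_abs' _ hBne]
  have hrAne : |xAp - xAm| / 2 ≠ 0 := by
    simp [abs_eq_zero, sub_ne_zero.mpr hAx]
  have hrBne : |xBp - xBm| / 2 ≠ 0 := by
    simp [abs_eq_zero, sub_ne_zero.mpr hBx]
  have hkey : Real.cos φ * ((xAm - xAp) * (xBm - xBp))
      = 4 * ((z.re - (xAp + xAm)/2) * (z.re - (xBp + xBm)/2) + z.im^2) := by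
    have hsA2 : sA ^ 2 = 1 := sign_sq' _ hAne
    have hsB2 : sB ^ 2 = 1 := sign_sq' _ hBne
    have hc1 : Real.cos φ * (|xAp - xAm|/2 * (|xBp - xBm|/2))
        = sA * sB * ((z.re - (xAp + xAm)/2) * (z.re - (xBp + xBm)/2) + z.im^2) := by
      rw [hφ, habs_tA, habs_tB, hre]
      have hD : |xAp - xAm| * |xBp - xBm| * (2*2) ≠ 0 :=
        mul_ne_zero (mul_ne_zero (abs_ne_zero.mpr (sub_ne_zero.mpr hAx))
          (abs_ne_zero.mpr (sub_ne_zero.mpr hBx))) (by norm_num)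
      field_simp
    linear_combination (-2*Real.cos φ*(xBm - xBp))*hsAabs
      + (-4*Real.cos φ*sA*(|xAp - xAm|/2))*hsBabs + (4*sA*sB)*hc1
      + (4*((z.re - (xAp + xAm)/2) * (z.re - (xBp + xBm)/2) + z.im^2)*sB^2)*hsA2
      + (4*((z.re - (xAp + xAm)/2) * (z.re - (xBp + xBm)/2) + z.im^2))*hsB2
  -- final value
  have hval : bAB = 1/2 + Real.cos φ / 2 := by
    rw [hbAB', div_eq_iff (mul_ne_zero (sub_ne_zero.mpr hAx) (sub_ne_zero.mpr hBx))]
    linear_combination (-1/2) * hkey - h1 - h2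
  constructor
  · rw [Real.cos_sq, hval, show 2*(φ/2) = φ by ring]
  · rw [hval]; ring
end

section
/- For rank-one spectral projections p_i(A) and p_j(B) given by eigenvectors a₊, b₊ and eigen-functionals a₋, b₋ (with a₋(a₊) ≠ 0, b₋(b₊) ≠ 0), the trace Tr(p_i(A)·p_j(B)) equals the cross-ratio b(ξ^i(A), θ^i(A), ξ^j(B), θ^j(B)) = (a₋(b₊)·b₋(a₊))/(a₋(a₊)·b₋(b₊)). -/
/-- For the rank-one spectral projections `p = p_i(A)`, `q = p_j(B)` determined by
eigenvectors `a₊, b₊` and eigen-functionals `a₋, b₋` (in general position), the trace of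
`p ∘ q` equals the cross-ratio `b(ξⁱ(A), θⁱ(A), ξʲ(B), θʲ(B))`. -/
theorem stmt19 {n : ℕ}
    (b : (Fin n → ℝ) → ((Fin n → ℝ) →ₗ[ℝ] ℝ) → (Fin n → ℝ) → ((Fin n → ℝ) →ₗ[ℝ] ℝ) → ℝ)
    (hb : ∀ x y z w, b x y z w = (y z * w x) / (y x * w z))
    (ap bp : Fin n → ℝ) (am bm : (Fin n → ℝ) →ₗ[ℝ] ℝ)
    (ham : am ap ≠ 0) (hbm : bm bp ≠ 0)
    (hgen1 : am bp ≠ 0) (hgen2 : bm ap ≠ 0)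
    (p q : (Fin n → ℝ) →ₗ[ℝ] (Fin n → ℝ))
    (hp : ∀ v, p v = (am v / am ap) • ap)
    (hq : ∀ v, q v = (bm v / bm bp) • bp) :
    LinearMap.trace ℝ (Fin n → ℝ) (p ∘ₗ q) = b ap am bp bm ∧
    b ap am bp bm = (am bp * bm ap) / (am ap * bm bp) := by
  have key : p ∘ₗ q =
      dualTensorHom ℝ (Fin n → ℝ) (Fin n → ℝ)
        (((am bp / (am ap * bm bp)) • bm) ⊗ₜ[ℝ] ap) := by
    refine LinearMap.ext fun v => ?_
    simp only [LinearMap.comp_apply, hp, hq, dualTensorHom_apply,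
      LinearMap.smul_apply, smul_eq_mul, LinearMap.map_smul]
    congr 1
    field_simp
  have htr : LinearMap.trace ℝ (Fin n → ℝ) (p ∘ₗ q)
      = (am bp / (am ap * bm bp)) * bm ap := by
    rw [key, LinearMap.trace_eq_contract_apply]
    simp
  refine ⟨?_, hb _ _ _ _⟩
  rw [htr, hb]
  ring
end
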